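/- arXiv:0912.0344 — 2 statements merged into one kernel-verified Lean document; each statement's English description precedes it below -/
import Mathlib

section
/- For a smooth positive conformal density ρ on a plane domain, define Θ_ρ = 2∂² log ρ − 2(∂ log ρ)² and the Gaussian curvature κ_ρ = −4 ∂\bar{∂} log ρ / ρ². Then \bar{∂}Θ_ρ = −(ρ²/2)·∂κ_ρ; consequently Θ_ρ is holomorphic if and only if κ_ρ is constant. -/
open Complex Set

/-- The Wirtinger derivative `∂ = (1/2)(∂/∂x - i ∂/∂y)` of a function `ℂ → ℂ`. -/
noncomputable def wirt (f : ℂ → ℂ) (z : ℂ) : ℂ :=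
  (1 / 2) * (fderiv ℝ f z 1 - Complex.I * fderiv ℝ f z Complex.I)

/-- The conjugate Wirtinger derivative `∂̄ = (1/2)(∂/∂x + i ∂/∂y)`. -/
noncomputable def wirtBar (f : ℂ → ℂ) (z : ℂ) : ℂ :=
  (1 / 2) * (fderiv ℝ f z 1 + Complex.I * fderiv ℝ f z Complex.I)

/-- `Θ_ρ = 2 ∂² log ρ - 2 (∂ log ρ)²`. -/
noncomputable def Theta (ρ : ℂ → ℝ) (z : ℂ) : ℂ :=
  2 * wirt (wirt fun w => ((Real.log (ρ w) : ℝ) : ℂ)) z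
    - 2 * (wirt (fun w => ((Real.log (ρ w) : ℝ) : ℂ)) z) ^ 2

/-- The Gaussian curvature `κ_ρ = -4 ∂∂̄ log ρ / ρ²` (as a `ℂ`-valued function). -/
noncomputable def curvature (ρ : ℂ → ℝ) (z : ℂ) : ℂ :=
  -4 * wirt (wirtBar fun w => ((Real.log (ρ w) : ℝ) : ℂ)) z / ((ρ z : ℂ)) ^ 2

/-! ### Auxiliary lemmas -/

lemma wirt_congr {f g : ℂ → ℂ} {z : ℂ} (h : f =ᶠ[nhds z] g) : wirt f z = wirt g z := by
  unfold wirt; rw [h.fderiv_eq]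

lemma wirtBar_congr {f g : ℂ → ℂ} {z : ℂ} (h : f =ᶠ[nhds z] g) : wirtBar f z = wirtBar g z := by
  unfold wirtBar; rw [h.fderiv_eq]

lemma wirt_of_fderiv_eq {g f : ℂ → ℂ} {z a : ℂ}
    (h : ∀ v, fderiv ℝ g z v = a * fderiv ℝ f z v) : wirt g z = a * wirt f z := by
  unfold wirt; rw [h, h]; ring

lemma wirtBar_of_fderiv_eq {g f : ℂ → ℂ} {z a : ℂ}
    (h : ∀ v, fderiv ℝ g z v = a * fderiv ℝ f z v) : wirtBar g z = a * wirtBar f z := by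
  unfold wirtBar; rw [h, h]; ring

lemma wirt_const {z : ℂ} (c : ℂ) : wirt (fun _ => c) z = 0 := by
  unfold wirt; simp

lemma wirt_sub {f g : ℂ → ℂ} {z : ℂ} (hf : DifferentiableAt ℝ f z)
    (hg : DifferentiableAt ℝ g z) :
    wirt (fun w => f w - g w) z = wirt f z - wirt g z := by
  unfold wirt; rw [fderiv_fun_sub hf hg]; simp; ring

lemma wirtBar_sub {f g : ℂ → ℂ} {z : ℂ} (hf : DifferentiableAt ℝ f z)
    (hg : DifferentiableAt ℝ g z) :
    wirtBar (fun w => f w - g w) z = wirtBar f z - wirtBar g z := by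
  unfold wirtBar; rw [fderiv_fun_sub hf hg]; simp; ring

lemma wirt_const_mul {f : ℂ → ℂ} {z : ℂ} (c : ℂ) (hf : DifferentiableAt ℝ f z) :
    wirt (fun w => c * f w) z = c * wirt f z := by
  apply wirt_of_fderiv_eq; intro v; rw [fderiv_const_mul hf]; simp

lemma wirtBar_const_mul {f : ℂ → ℂ} {z : ℂ} (c : ℂ) (hf : DifferentiableAt ℝ f z) :
    wirtBar (fun w => c * f w) z = c * wirtBar f z := by
  apply wirtBar_of_fderiv_eq; intro v; rw [fderiv_const_mul hf]; simp

lemma wirt_mul {f g : ℂ → ℂ} {z : ℂ} (hf : DifferentiableAt ℝ f z)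
    (hg : DifferentiableAt ℝ g z) :
    wirt (fun w => f w * g w) z = wirt f z * g z + f z * wirt g z := by
  unfold wirt; rw [fderiv_fun_mul hf hg]; simp [smul_eq_mul]; ring

lemma wirtBar_mul {f g : ℂ → ℂ} {z : ℂ} (hf : DifferentiableAt ℝ f z)
    (hg : DifferentiableAt ℝ g z) :
    wirtBar (fun w => f w * g w) z = wirtBar f z * g z + f z * wirtBar g z := by
  unfold wirtBar; rw [fderiv_fun_mul hf hg]; simp [smul_eq_mul]; ring

lemma wirt_inv {f : ℂ → ℂ} {z : ℂ} (hf : DifferentiableAt ℝ f z) (h0 : f z ≠ 0) :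
    wirt (fun w => (f w)⁻¹) z = -(wirt f z) / (f z) ^ 2 := by
  have key : ∀ v, fderiv ℝ (fun w => (f w)⁻¹) z v = (-(f z ^ 2)⁻¹) * fderiv ℝ f z v := by
    intro v
    have h1 := (hasDerivAt_inv h0).hasFDerivAt.restrictScalars ℝ
    have h2 := h1.comp z hf.hasFDerivAt
    rw [show (fun w => (f w)⁻¹) = (fun y => y⁻¹) ∘ f from rfl, h2.fderiv]
    simp [smul_eq_mul]
    ring
  rw [wirt_of_fderiv_eq key]
  field_simp

lemma wirt_wirtBar_comm {f : ℂ → ℂ} {z : ℂ} (hf : ContDiffAt ℝ 2 f z) :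
    wirtBar (wirt f) z = wirt (wirtBar f) z := by
  have hF : DifferentiableAt ℝ (fderiv ℝ f) z :=
    (hf.fderiv_right (m := 1) (le_refl (2 : WithTop ℕ∞))).differentiableAt (by norm_num)
  have hd : ∀ v : ℂ, HasFDerivAt (fun w => fderiv ℝ f w v)
      ((ContinuousLinearMap.apply ℝ ℂ v).comp (fderiv ℝ (fderiv ℝ f) z)) z := fun v =>
    (ContinuousLinearMap.apply ℝ ℂ v).hasFDerivAt.comp z hF.hasFDerivAt
  have e1 : ∀ u : ℂ, fderiv ℝ (wirt f) z u =
      (1 / 2) * (fderiv ℝ (fderiv ℝ f) z u 1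
        - Complex.I * fderiv ℝ (fderiv ℝ f) z u Complex.I) := by
    intro u
    have h : HasFDerivAt (wirt f)
        ((1 / 2 : ℂ) • (((ContinuousLinearMap.apply ℝ ℂ (1 : ℂ)).comp (fderiv ℝ (fderiv ℝ f) z))
          - Complex.I • ((ContinuousLinearMap.apply ℝ ℂ Complex.I).comp
            (fderiv ℝ (fderiv ℝ f) z)))) z := by
      exact (((hd 1).sub ((hd Complex.I).const_mul Complex.I)).const_mul (1 / 2 : ℂ))
    rw [h.fderiv]
    simp [smul_eq_mul]
  have e2 : ∀ u : ℂ, fderiv ℝ (wirtBar f) z u =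
      (1 / 2) * (fderiv ℝ (fderiv ℝ f) z u 1
        + Complex.I * fderiv ℝ (fderiv ℝ f) z u Complex.I) := by
    intro u
    have h : HasFDerivAt (wirtBar f)
        ((1 / 2 : ℂ) • (((ContinuousLinearMap.apply ℝ ℂ (1 : ℂ)).comp (fderiv ℝ (fderiv ℝ f) z))
          + Complex.I • ((ContinuousLinearMap.apply ℝ ℂ Complex.I).comp
            (fderiv ℝ (fderiv ℝ f) z)))) z := by
      exact (((hd 1).add ((hd Complex.I).const_mul Complex.I)).const_mul (1 / 2 : ℂ))
    rw [h.fderiv]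
    simp [smul_eq_mul]
    ring
  have symm := hf.isSymmSndFDerivAt (by simp)
  have hs := symm 1 Complex.I
  have l1 : wirtBar (wirt f) z = (1 / 2) * (fderiv ℝ (wirt f) z 1
      + Complex.I * fderiv ℝ (wirt f) z Complex.I) := rfl
  have l2 : wirt (wirtBar f) z = (1 / 2) * (fderiv ℝ (wirtBar f) z 1
      - Complex.I * fderiv ℝ (wirtBar f) z Complex.I) := rfl
  rw [l1, l2, e1, e1, e2, e2, hs]
  ring

lemma contDiffOn_wirt {f : ℂ → ℂ} {Ω : Set ℂ} (hΩ : IsOpen Ω)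
    (hf : ContDiffOn ℝ (⊤ : ℕ∞) f Ω) : ContDiffOn ℝ (⊤ : ℕ∞) (wirt f) Ω := by
  have hF : ContDiffOn ℝ (⊤ : ℕ∞) (fderiv ℝ f) Ω :=
    hf.fderiv_of_isOpen hΩ (by simp)
  have h1 : ContDiffOn ℝ (⊤ : ℕ∞) (fun w => fderiv ℝ f w 1) Ω :=
    hF.clm_apply contDiffOn_const
  have h2 : ContDiffOn ℝ (⊤ : ℕ∞) (fun w => fderiv ℝ f w Complex.I) Ω :=
    hF.clm_apply contDiffOn_const
  exact contDiffOn_const.mul (h1.sub (contDiffOn_const.mul h2))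

lemma contDiffOn_wirtBar {f : ℂ → ℂ} {Ω : Set ℂ} (hΩ : IsOpen Ω)
    (hf : ContDiffOn ℝ (⊤ : ℕ∞) f Ω) : ContDiffOn ℝ (⊤ : ℕ∞) (wirtBar f) Ω := by
  have hF : ContDiffOn ℝ (⊤ : ℕ∞) (fderiv ℝ f) Ω :=
    hf.fderiv_of_isOpen hΩ (by simp)
  have h1 : ContDiffOn ℝ (⊤ : ℕ∞) (fun w => fderiv ℝ f w 1) Ω :=
    hF.clm_apply contDiffOn_const
  have h2 : ContDiffOn ℝ (⊤ : ℕ∞) (fun w => fderiv ℝ f w Complex.I) Ω :=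
    hF.clm_apply contDiffOn_const
  exact contDiffOn_const.mul (h1.add (contDiffOn_const.mul h2))

lemma diffAt_of_smooth {E : Type*} [NormedAddCommGroup E] [NormedSpace ℝ E]
    {f : ℂ → E} {Ω : Set ℂ} (hΩ : IsOpen Ω)
    (hf : ContDiffOn ℝ (⊤ : ℕ∞) f Ω) {z : ℂ} (hz : z ∈ Ω) : DifferentiableAt ℝ f z :=
  (hf.contDiffAt (hΩ.mem_nhds hz)).differentiableAt (by simp)

lemma contDiffAt_two_of_smooth {f : ℂ → ℂ} {Ω : Set ℂ} (hΩ : IsOpen Ω)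
    (hf : ContDiffOn ℝ (⊤ : ℕ∞) f Ω) {z : ℂ} (hz : z ∈ Ω) : ContDiffAt ℝ 2 f z :=
  (hf.contDiffAt (hΩ.mem_nhds hz)).of_le (by
    rw [show (2:WithTop ℕ∞) = ((2:ℕ∞):WithTop ℕ∞) from rfl, WithTop.coe_le_coe]
    exact le_top)

lemma wirt_conj {g : ℂ → ℂ} {z : ℂ} (hg : DifferentiableAt ℝ g z) :
    wirt (fun w => (starRingEnd ℂ) (g w)) z = (starRingEnd ℂ) (wirtBar g z) := by
  have key : ∀ v, fderiv ℝ (fun w => (starRingEnd ℂ) (g w)) z v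
      = (starRingEnd ℂ) (fderiv ℝ g z v) := by
    intro v
    have h := (Complex.conjCLE.toContinuousLinearMap.hasFDerivAt.comp z hg.hasFDerivAt)
    rw [show (fun w => (starRingEnd ℂ) (g w)) = (⇑(Complex.conjCLE.toContinuousLinearMap) ∘ g)
      from rfl, h.fderiv]
    simp
  unfold wirt wirtBar
  rw [key, key]
  rw [map_mul, map_add, map_mul]
  simp [map_ofNat]
  ring

lemma fderiv_ofReal_comp {u : ℂ → ℝ} {z : ℂ} (hu : DifferentiableAt ℝ u z) (v : ℂ) :
    fderiv ℝ (fun w => ((u w : ℝ) : ℂ)) z v = ((fderiv ℝ u z v : ℝ) : ℂ) := by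
  have h := Complex.ofRealCLM.hasFDerivAt.comp z hu.hasFDerivAt
  rw [show (fun w => ((u w : ℝ) : ℂ)) = (⇑Complex.ofRealCLM ∘ u) from rfl, h.fderiv]
  simp

/-- for a real-valued function, `∂̄ f = conj (∂ f)`. -/
lemma wirtBar_eq_conj_wirt {u : ℂ → ℝ} {z : ℂ} (hu : DifferentiableAt ℝ u z) :
    wirtBar (fun w => ((u w : ℝ) : ℂ)) z
      = (starRingEnd ℂ) (wirt (fun w => ((u w : ℝ) : ℂ)) z) := by
  unfold wirt wirtBar
  rw [fderiv_ofReal_comp hu, fderiv_ofReal_comp hu, map_mul, map_sub, map_mul]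
  simp [map_ofNat]

/-- chain rule for `log`. -/
lemma fderiv_log_comp {ρ : ℂ → ℝ} {z : ℂ} (hρ : DifferentiableAt ℝ ρ z) (h0 : 0 < ρ z) (v : ℂ) :
    fderiv ℝ (fun w => ((Real.log (ρ w) : ℝ) : ℂ)) z v
      = ((ρ z : ℝ) : ℂ)⁻¹ * fderiv ℝ (fun w => ((ρ w : ℝ) : ℂ)) z v := by
  have hlog : HasDerivAt Real.log (ρ z)⁻¹ (ρ z) := Real.hasDerivAt_log (ne_of_gt h0)
  have hc : HasFDerivAt (fun w => Real.log (ρ w)) ((ρ z)⁻¹ • fderiv ℝ ρ z) z :=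
    hlog.comp_hasFDerivAt z hρ.hasFDerivAt
  have hu : DifferentiableAt ℝ (fun w => Real.log (ρ w)) z := hc.differentiableAt
  rw [fderiv_ofReal_comp hu, fderiv_ofReal_comp hρ, hc.fderiv]
  push_cast
  simp [smul_eq_mul]

set_option maxHeartbeats 1000000 in
/-- `∂̄ Θ_ρ = -(ρ²/2) ∂ κ_ρ`; hence `Θ_ρ` is holomorphic iff `κ_ρ` is constant. -/
theorem thetaBar_eq_curvature_deriv
    (Ω : Set ℂ) (hΩ : IsOpen Ω) (hconn : IsConnected Ω)
    (ρ : ℂ → ℝ) (hρpos : ∀ z ∈ Ω, 0 < ρ z) (hρsm : ContDiffOn ℝ (⊤ : ℕ∞) ρ Ω) :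
    (∀ z ∈ Ω, wirtBar (Theta ρ) z = -((ρ z : ℂ) ^ 2 / 2) * wirt (curvature ρ) z) ∧
    ((∀ z ∈ Ω, wirtBar (Theta ρ) z = 0) ↔ ∃ k : ℂ, ∀ z ∈ Ω, curvature ρ z = k) := by
  -- notation
  have hρT : ContDiffOn ℝ (⊤ : ℕ∞) ρ Ω := hρsm.of_le (by simp)
  set f : ℂ → ℂ := fun w => ((Real.log (ρ w) : ℝ) : ℂ) with hfdef
  have hρc : ContDiffOn ℝ (⊤ : ℕ∞) (fun w => ((ρ w : ℝ) : ℂ)) Ω :=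
    Complex.ofRealCLM.contDiff.comp_contDiffOn hρT
  have hu : ContDiffOn ℝ (⊤ : ℕ∞) (fun w => Real.log (ρ w)) Ω := fun w hw =>
    (Real.contDiffAt_log.2 (ne_of_gt (hρpos w hw))).comp_contDiffWithinAt w (hρT w hw)
  have hf : ContDiffOn ℝ (⊤ : ℕ∞) f Ω := Complex.ofRealCLM.contDiff.comp_contDiffOn hu
  have hg : ContDiffOn ℝ (⊤ : ℕ∞) (wirt f) Ω := contDiffOn_wirt hΩ hf
  have hh : ContDiffOn ℝ (⊤ : ℕ∞) (wirtBar f) Ω := contDiffOn_wirtBar hΩ hf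
  have hwh : ContDiffOn ℝ (⊤ : ℕ∞) (wirt (wirtBar f)) Ω := contDiffOn_wirt hΩ hh
  have hwg : ContDiffOn ℝ (⊤ : ℕ∞) (wirt (wirt f)) Ω := contDiffOn_wirt hΩ hg
  have hcomm : Set.EqOn (wirtBar (wirt f)) (wirt (wirtBar f)) Ω := fun w hw =>
    wirt_wirtBar_comm (contDiffAt_two_of_smooth hΩ hf hw)
  have hρne : ∀ z ∈ Ω, ((ρ z : ℝ) : ℂ) ≠ 0 := fun z hz => by
    simpa using ne_of_gt (hρpos z hz)
  -- curvature as a product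
  have hcurv : curvature ρ = fun w => (-4 * wirt (wirtBar f) w) * (((ρ w : ℝ) : ℂ) ^ 2)⁻¹ :=
    funext fun w => div_eq_mul_inv _ _
  have hκT : ContDiffOn ℝ (⊤ : ℕ∞) (curvature ρ) Ω := by
    rw [hcurv]
    exact (contDiffOn_const.mul hwh).mul
      ((hρc.pow 2).inv fun w hw => pow_ne_zero 2 (hρne w hw))
  -- main identity
  have main : ∀ z ∈ Ω, wirtBar (Theta ρ) z
      = -((ρ z : ℂ) ^ 2 / 2) * wirt (curvature ρ) z := by
    intro z hz
    have hmem := hΩ.mem_nhds hz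
    have dρc : DifferentiableAt ℝ (fun w => ((ρ w : ℝ) : ℂ)) z := diffAt_of_smooth hΩ hρc hz
    have dρ : DifferentiableAt ℝ ρ z := diffAt_of_smooth hΩ hρT hz
    have dg : DifferentiableAt ℝ (wirt f) z := diffAt_of_smooth hΩ hg hz
    have dh : DifferentiableAt ℝ (wirtBar f) z := diffAt_of_smooth hΩ hh hz
    have dwg : DifferentiableAt ℝ (wirt (wirt f)) z := diffAt_of_smooth hΩ hwg hz
    have dwh : DifferentiableAt ℝ (wirt (wirtBar f)) z := diffAt_of_smooth hΩ hwh hz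
    have hρz : ((ρ z : ℝ) : ℂ) ≠ 0 := hρne z hz
    -- LHS
    have hTheta : Theta ρ = fun w => 2 * wirt (wirt f) w - 2 * (wirt f w) ^ 2 := rfl
    have d1 : DifferentiableAt ℝ (fun w => 2 * wirt (wirt f) w) z := dwg.const_mul 2
    have d2 : DifferentiableAt ℝ (fun w => 2 * (wirt f w) ^ 2) z := (dg.pow 2).const_mul 2
    have e1 : wirtBar (Theta ρ) z
        = wirtBar (fun w => 2 * wirt (wirt f) w) z - wirtBar (fun w => 2 * (wirt f w) ^ 2) z := by
      rw [hTheta]; exact wirtBar_sub d1 d2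
    have e2 : wirtBar (fun w => 2 * wirt (wirt f) w) z = 2 * wirtBar (wirt (wirt f)) z :=
      wirtBar_const_mul 2 dwg
    have e3 : wirtBar (fun w => 2 * (wirt f w) ^ 2) z
        = 2 * wirtBar (fun w => (wirt f w) ^ 2) z := wirtBar_const_mul 2 (dg.pow 2)
    have e4 : wirtBar (fun w => (wirt f w) ^ 2) z = 2 * (wirt f z * wirtBar (wirt f) z) := by
      have hsq : (fun w => (wirt f w) ^ 2) = fun w => wirt f w * wirt f w :=
        funext fun w => sq (wirt f w)
      rw [hsq, wirtBar_mul dg dg]; ring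
    have e5 : wirtBar (wirt (wirt f)) z = wirt (wirt (wirtBar f)) z := by
      rw [wirt_wirtBar_comm (contDiffAt_two_of_smooth hΩ hg hz)]
      exact wirt_congr (Filter.eventuallyEq_of_mem hmem hcomm)
    have e6 : wirtBar (wirt f) z = wirt (wirtBar f) z := hcomm hz
    -- RHS
    have r1 : wirt (curvature ρ) z
        = wirt (fun w => -4 * wirt (wirtBar f) w) z * ((((ρ z : ℝ) : ℂ)) ^ 2)⁻¹
          + (-4 * wirt (wirtBar f) z) * wirt (fun w => ((((ρ w : ℝ) : ℂ)) ^ 2)⁻¹) z := by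
      rw [hcurv]
      exact wirt_mul (dwh.const_mul (-4)) ((dρc.pow 2).inv (pow_ne_zero 2 hρz))
    have r2 : wirt (fun w => -4 * wirt (wirtBar f) w) z = -4 * wirt (wirt (wirtBar f)) z :=
      wirt_const_mul (-4) dwh
    have r3 : wirt (fun w => ((((ρ w : ℝ) : ℂ)) ^ 2)⁻¹) z
        = -(wirt (fun w => (((ρ w : ℝ) : ℂ)) ^ 2) z) / ((((ρ z : ℝ) : ℂ)) ^ 2) ^ 2 :=
      wirt_inv (dρc.pow 2) (pow_ne_zero 2 hρz)
    have r4 : wirt (fun w => (((ρ w : ℝ) : ℂ)) ^ 2) z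
        = 2 * (((ρ z : ℝ) : ℂ) * wirt (fun w => ((ρ w : ℝ) : ℂ)) z) := by
      have hsq : (fun w => (((ρ w : ℝ) : ℂ)) ^ 2)
          = fun w => ((ρ w : ℝ) : ℂ) * ((ρ w : ℝ) : ℂ) := funext fun w => sq _
      rw [hsq, wirt_mul dρc dρc]; ring
    have r5 : wirt f z = ((ρ z : ℝ) : ℂ)⁻¹ * wirt (fun w => ((ρ w : ℝ) : ℂ)) z :=
      wirt_of_fderiv_eq (fderiv_log_comp dρ (hρpos z hz))
    rw [e1, e2, e3, e4, e5, e6, r1, r2, r3, r4, r5]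
    field_simp
    ring
  refine ⟨main, ?_, ?_⟩
  · -- holomorphic ⇒ curvature constant
    intro hθ
    have hwκ : ∀ z ∈ Ω, wirt (curvature ρ) z = 0 := by
      intro z hz
      have h := (main z hz).symm.trans (hθ z hz)
      have hne : -((ρ z : ℂ) ^ 2 / 2) ≠ 0 :=
        neg_ne_zero.mpr (div_ne_zero (pow_ne_zero 2 (hρne z hz)) two_ne_zero)
      exact (mul_eq_zero.mp h).resolve_left hne
    have hreal : ∀ z ∈ Ω, (starRingEnd ℂ) (curvature ρ z) = curvature ρ z := by
      intro z hz
      have dg : DifferentiableAt ℝ (wirt f) z := diffAt_of_smooth hΩ hg hz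
      have hhg : Set.EqOn (wirtBar f) (fun w => (starRingEnd ℂ) (wirt f w)) Ω := fun w hw =>
        wirtBar_eq_conj_wirt (diffAt_of_smooth hΩ hu hw)
      have h1 : wirt (wirtBar f) z = wirt (fun w => (starRingEnd ℂ) (wirt f w)) z :=
        wirt_congr (Filter.eventuallyEq_of_mem (hΩ.mem_nhds hz) hhg)
      have h2 : wirt (fun w => (starRingEnd ℂ) (wirt f w)) z
          = (starRingEnd ℂ) (wirtBar (wirt f) z) := wirt_conj dg
      have h3 : (starRingEnd ℂ) (wirt (wirtBar f) z) = wirt (wirtBar f) z := by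
        conv_rhs => rw [h1, h2, hcomm hz]
      have hκz : curvature ρ z = -4 * wirt (wirtBar f) z / ((ρ z : ℂ)) ^ 2 := rfl
      rw [hκz, map_div₀, map_mul, map_pow, Complex.conj_ofReal, h3, map_neg, map_ofNat]
    have hder0 : ∀ z ∈ Ω, fderiv ℝ (curvature ρ) z = 0 := by
      intro z hz
      have dκ : DifferentiableAt ℝ (curvature ρ) z := diffAt_of_smooth hΩ hκT hz
      have hev : curvature ρ =ᶠ[nhds z] fun w => (((curvature ρ w).re : ℝ) : ℂ) :=
        Filter.eventuallyEq_of_mem (hΩ.mem_nhds hz) fun w hw =>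
          (Complex.conj_eq_iff_re.mp (hreal w hw)).symm
      have dre : DifferentiableAt ℝ (fun w => (curvature ρ w).re) z :=
        Complex.reCLM.differentiableAt.comp z dκ
      have hval : ∀ v, fderiv ℝ (curvature ρ) z v
          = ((fderiv ℝ (fun w => (curvature ρ w).re) z v : ℝ) : ℂ) := by
        intro v
        rw [hev.fderiv_eq]
        exact fderiv_ofReal_comp dre v
      have hw0 : wirt (curvature ρ) z = 0 := hwκ z hz
      unfold wirt at hw0
      rw [hval 1, hval Complex.I] at hw0
      set a := fderiv ℝ (fun w => (curvature ρ w).re) z 1 with ha_def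
      set b := fderiv ℝ (fun w => (curvature ρ w).re) z Complex.I with hb_def
      have hab : (a : ℂ) - Complex.I * (b : ℂ) = 0 := by
        have h2 : (1 / 2 : ℂ) ≠ 0 := by norm_num
        exact (mul_eq_zero.mp hw0).resolve_left h2
      rw [Complex.ext_iff] at hab
      simp [Complex.ofReal_re, Complex.ofReal_im] at hab
      obtain ⟨ha, hb⟩ := hab
      ext v
      have hv : v.re • (1 : ℂ) + v.im • Complex.I = v := by
        rw [Complex.real_smul, Complex.real_smul, mul_one, Complex.re_add_im]
      conv_lhs => rw [← hv]
      rw [map_add, map_smul, map_smul, hval 1, hval Complex.I, ← ha_def, ← hb_def, ha, hb]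
      simp
    have hloc : ∀ z ∈ Ω, ∃ ε > 0, Metric.ball z ε ⊆ Ω ∧
        ∀ y ∈ Metric.ball z ε, curvature ρ y = curvature ρ z := by
      intro z hz
      obtain ⟨ε, hε, hball⟩ := Metric.isOpen_iff.mp hΩ z hz
      refine ⟨ε, hε, hball, fun y hy => ?_⟩
      have hconv : Convex ℝ (Metric.ball z ε) := convex_ball z ε
      have hdiff : DifferentiableOn ℝ (curvature ρ) (Metric.ball z ε) := fun w hw =>
        (diffAt_of_smooth hΩ hκT (hball hw)).differentiableWithinAt
      have hzero : ∀ w ∈ Metric.ball z ε,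
          fderivWithin ℝ (curvature ρ) (Metric.ball z ε) w = 0 := fun w hw => by
        rw [fderivWithin_of_isOpen Metric.isOpen_ball hw]
        exact hder0 w (hball hw)
      exact hconv.is_const_of_fderivWithin_eq_zero hdiff hzero hy (Metric.mem_ball_self hε)
    obtain ⟨z₀, hz₀⟩ := hconn.nonempty
    haveI : PreconnectedSpace Ω := Subtype.preconnectedSpace hconn.isPreconnected
    have hlc : IsLocallyConstant (fun x : Ω => curvature ρ x.val) := by
      rw [IsLocallyConstant.iff_exists_open]
      rintro ⟨x, hx⟩
      obtain ⟨ε, hε, hball, hconst⟩ := hloc x hx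
      have hU : IsOpen (Subtype.val ⁻¹' Metric.ball x ε : Set Ω) :=
        Metric.isOpen_ball.preimage continuous_subtype_val
      have hxU : (⟨x, hx⟩ : Ω) ∈ (Subtype.val ⁻¹' Metric.ball x ε : Set Ω) :=
        Set.mem_preimage.mpr (Metric.mem_ball_self hε)
      refine ⟨(Subtype.val ⁻¹' Metric.ball x ε : Set Ω), hU, hxU, ?_⟩
      rintro ⟨y, hy⟩ hmem
      exact hconst y hmem
    exact ⟨curvature ρ z₀, fun z hz =>
      hlc.apply_eq_of_preconnectedSpace ⟨z, hz⟩ ⟨z₀, hz₀⟩⟩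
  · -- curvature constant ⇒ holomorphic
    rintro ⟨k, hk⟩ z hz
    rw [main z hz]
    have h0 : wirt (curvature ρ) z = 0 := by
      rw [wirt_congr (f := curvature ρ) (g := fun _ => k)
        (Filter.eventuallyEq_of_mem (hΩ.mem_nhds hz) fun w hw => hk w hw)]
      exact wirt_const k
    rw [h0, mul_zero]
end

section
/- Every holomorphic function g on the unit disk with sup_{z∈𝔻}(1−|z|²)²|g(z)| ≤ 1 satisfies |g'(0)| ≤ 25√5/16, with equality for g(z) = (25√5/16)z. -/
/-!
Cauchy's estimate on the circle `|z| = r` gives `|g'(0)| ≤ 1 / (r (1 - r²)²)` for `0 < r < 1`,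
and `r (1 - r²)²` is maximal on `[0, 1]` at `r = 1/√5`, where it equals `16 / (25√5)`.
The same maximum shows that `(25√5/16) z` satisfies the weighted bound.
-/

open Complex Metric

theorem norm_deriv_le_of_weighted_norm_le {F : Type*} [NormedAddCommGroup F]
    [NormedSpace ℂ F] {g : ℂ → F} {M r : ℝ} (hg : DifferentiableOn ℂ g (ball 0 1))
    (hM : ∀ z ∈ ball (0 : ℂ) 1, (1 - ‖z‖ ^ 2) ^ 2 * ‖g z‖ ≤ M) (hr0 : 0 < r) (hr1 : r < 1) :
    ‖deriv g 0‖ ≤ M / (r * (1 - r ^ 2) ^ 2) := by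
  have hweight : 0 < (1 - r ^ 2) ^ 2 := by
    have : r ^ 2 < 1 := by nlinarith
    positivity
  have hdiff : DiffContOnCl ℂ g (ball 0 r) :=
    (hg.mono (by rw [closure_ball _ hr0.ne']; exact closedBall_subset_ball hr1)).diffContOnCl
  have hsphere : ∀ z ∈ sphere (0 : ℂ) r, ‖g z‖ ≤ M / (1 - r ^ 2) ^ 2 := by
    intro z hz
    have hnorm : ‖z‖ = r := mem_sphere_zero_iff_norm.1 hz
    rw [le_div_iff₀ hweight, mul_comm, ← hnorm]
    exact hM z (mem_ball_zero_iff.2 (hnorm ▸ hr1))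
  calc ‖deriv g 0‖ ≤ M / (1 - r ^ 2) ^ 2 / r :=
        norm_deriv_le_of_forall_mem_sphere_norm_le hr0 hdiff hsphere
    _ = M / (r * (1 - r ^ 2) ^ 2) := by rw [div_div, mul_comm]

/-- AM–GM for the five numbers `4u, 1 - u, 1 - u, 1 - u, 1 - u`, whose sum is `4`. -/
theorem mul_one_sub_pow_four_le {u : ℝ} (hu : u ≤ 1) :
    3125 * u * (1 - u) ^ 4 ≤ 256 := by
  nlinarith [sq_nonneg (5 * u - 1), sq_nonneg (50 * u - 65),
    mul_nonneg (mul_nonneg (sq_nonneg (5 * u - 1)) (by linarith : (0 : ℝ) ≤ 1 - u))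
      (by nlinarith [sq_nonneg (50 * u - 65)] : (0 : ℝ) ≤ 125 * u ^ 2 - 325 * u + 240)]

theorem mul_one_sub_sq_sq_le {t : ℝ} (h0 : 0 ≤ t) (h1 : t ≤ 1) :
    25 * Real.sqrt 5 * (t * (1 - t ^ 2) ^ 2) ≤ 16 := by
  have hsqrt : Real.sqrt 5 ^ 2 = 5 := Real.sq_sqrt (by norm_num)
  have hsq : (25 * Real.sqrt 5 * (t * (1 - t ^ 2) ^ 2)) ^ 2
      = 3125 * t ^ 2 * (1 - t ^ 2) ^ 4 := by
    rw [mul_pow, mul_pow, hsqrt]; ring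
  refine le_of_sq_le_sq ?_ (by norm_num)
  rw [hsq]
  linarith [mul_one_sub_pow_four_le (by nlinarith : t ^ 2 ≤ 1)]

theorem inv_sqrt_five_mul_one_sub_sq_sq :
    (Real.sqrt 5)⁻¹ * (1 - (Real.sqrt 5)⁻¹ ^ 2) ^ 2 = 16 / (25 * Real.sqrt 5) := by
  have hsqrt : Real.sqrt 5 ^ 2 = 5 := Real.sq_sqrt (by norm_num)
  have hpos : 0 < Real.sqrt 5 := by positivity
  rw [inv_pow, hsqrt]
  field_simp
  norm_num

/-- Wirths' lemma: a holomorphic `g` on `𝔻` with `sup (1-|z|²)²|g(z)| ≤ 1` satisfies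
`|g'(0)| ≤ 25√5/16`, with equality for `g(z) = (25√5/16) z`. -/
theorem wirths_bound :
    (∀ g : ℂ → ℂ, DifferentiableOn ℂ g (ball (0 : ℂ) 1) →
      (∀ z ∈ ball (0 : ℂ) 1, (1 - ‖z‖ ^ 2) ^ 2 * ‖g z‖ ≤ 1) →
      ‖deriv g 0‖ ≤ 25 * Real.sqrt 5 / 16) ∧
    (∀ z ∈ ball (0 : ℂ) 1,
      (1 - ‖z‖ ^ 2) ^ 2 *
        ‖(fun w => ((25 * Real.sqrt 5 / 16 : ℝ) : ℂ) * w) z‖ ≤ 1) ∧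
    ‖deriv (fun w => ((25 * Real.sqrt 5 / 16 : ℝ) : ℂ) * w) 0‖
      = 25 * Real.sqrt 5 / 16 := by
  have hc : 0 ≤ 25 * Real.sqrt 5 / 16 := by positivity
  have hnorm (z : ℂ) :
      ‖((25 * Real.sqrt 5 / 16 : ℝ) : ℂ) * z‖ = 25 * Real.sqrt 5 / 16 * ‖z‖ := by
    rw [norm_mul, Complex.norm_real, Real.norm_of_nonneg hc]
  refine ⟨fun g hg hM => ?_, fun z hz => ?_, ?_⟩
  · have hr1 : (Real.sqrt 5)⁻¹ < 1 := inv_lt_one_of_one_lt₀ (by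
      rw [Real.lt_sqrt zero_le_one]; norm_num)
    calc ‖deriv g 0‖ ≤ 1 / ((Real.sqrt 5)⁻¹ * (1 - (Real.sqrt 5)⁻¹ ^ 2) ^ 2) :=
          norm_deriv_le_of_weighted_norm_le hg hM (by positivity) hr1
      _ = 25 * Real.sqrt 5 / 16 := by rw [inv_sqrt_five_mul_one_sub_sq_sq, one_div_div]
  · have hz1 : ‖z‖ ≤ 1 := (mem_ball_zero_iff.1 hz).le
    have hmax := mul_one_sub_sq_sq_le (norm_nonneg z) hz1
    rw [hnorm]
    linarith
  · rw [((hasDerivAt_id' (0 : ℂ)).const_mul _).deriv, mul_one, Complex.norm_real,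
      Real.norm_of_nonneg hc]
end
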